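/- arXiv:1912.03127 — 8 statements merged into one kernel-verified Lean document; each statement's English description precedes it below -/
import Mathlib

section
/- Let G₁ and G₂ be simple graphs with γ(G₁) ≥ 3 and γ(G₂) ≥ 3, and suppose G₁ and G₂ are connected. Let D_s = {v₁, v₂} and D_t = {w₁, w₂} be dominating sets of G₁ + G₂ with v₁, w₁ ∈ V(G₁) and v₂, w₂ ∈ V(G₂). Then D_s can be reconfigured into D_t by token sliding: there is a sequence of dominating sets of size 2 starting at D_s and ending at D_t, in which consecutive sets differ by replacing one vertex with an adjacent one. -/
def MDominates {V : Type*} (G : SimpleGraph V) (D : Multiset V) : Prop :=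
  ∀ v : V, ∃ d ∈ D, d = v ∨ G.Adj d v

/-- One token-sliding step between dominating multisets: slide one token along an edge. -/
def TSStep {V : Type*} [DecidableEq V] (G : SimpleGraph V) (D D' : Multiset V) : Prop :=
  MDominates G D ∧ MDominates G D' ∧
    ∃ u v : V, G.Adj u v ∧ u ∈ D ∧ D' = v ::ₘ D.erase u

/-- The join of two graphs: disjoint union plus all edges between the parts. -/
def joinGraph {V₁ V₂ : Type*} (G₁ : SimpleGraph V₁) (G₂ : SimpleGraph V₂) :
    SimpleGraph (V₁ ⊕ V₂) where
  Adj x y :=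
    match x, y with
    | Sum.inl a, Sum.inl b => G₁.Adj a b
    | Sum.inr a, Sum.inr b => G₂.Adj a b
    | Sum.inl _, Sum.inr _ => True
    | Sum.inr _, Sum.inl _ => True
  symm := ⟨by rintro (a | a) (b | b) h <;> simp_all <;> exact h.symm⟩
  loopless := ⟨by rintro (a | a) h <;> simp_all⟩

noncomputable def dominationNumber (V : Type*) [Fintype V] (G : SimpleGraph V) : ℕ :=
  sInf {n : ℕ | ∃ D : Finset V, (∀ v : V, ∃ d ∈ D, d = v ∨ G.Adj d v) ∧ D.card = n}

/-!
A pair with one token on each side dominates the join, since each token dominates the whole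
other side. So the token on the `G₁` side can slide along a path from `v₁` to `w₁` while the
other stays at `v₂`, and then the token on the `G₂` side along a path from `v₂` to `w₂`; every
intermediate pair is again of this mixed form.
-/

theorem SimpleGraph.Reachable.reflTransGen_of_adj {V β : Type*} {G : SimpleGraph V}
    {p : β → β → Prop} (f : V → β) (hf : ∀ a b, G.Adj a b → p (f a) (f b)) {a b : V}
    (h : G.Reachable a b) : Relation.ReflTransGen p (f a) (f b) :=
  Relation.ReflTransGen.lift f hf _ _ ((G.reachable_iff_reflTransGen a b).mp h)

section Join

variable {V₁ V₂ : Type*} (G₁ : SimpleGraph V₁) (G₂ : SimpleGraph V₂)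

theorem mdominates_joinGraph_inl_inr (a : V₁) (b : V₂) :
    MDominates (joinGraph G₁ G₂) {Sum.inl a, Sum.inr b} := by
  rintro (x | x)
  · exact ⟨Sum.inr b, by simp, Or.inr trivial⟩
  · exact ⟨Sum.inl a, by simp, Or.inr trivial⟩

variable [DecidableEq V₁] [DecidableEq V₂]

theorem tsStep_joinGraph_inl {a a' : V₁} (b : V₂) (h : G₁.Adj a a') :
    TSStep (joinGraph G₁ G₂) {Sum.inl a, Sum.inr b} {Sum.inl a', Sum.inr b} := by
  refine ⟨mdominates_joinGraph_inl_inr G₁ G₂ a b, mdominates_joinGraph_inl_inr G₁ G₂ a' b,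
    Sum.inl a, Sum.inl a', h, by simp, ?_⟩
  simp [Multiset.insert_eq_cons]

theorem tsStep_joinGraph_inr (a : V₁) {b b' : V₂} (h : G₂.Adj b b') :
    TSStep (joinGraph G₁ G₂) {Sum.inl a, Sum.inr b} {Sum.inl a, Sum.inr b'} := by
  refine ⟨mdominates_joinGraph_inl_inr G₁ G₂ a b, mdominates_joinGraph_inl_inr G₁ G₂ a b',
    Sum.inr b, Sum.inr b', h, by simp, ?_⟩
  simpa [Multiset.insert_eq_cons] using Multiset.pair_comm (Sum.inl a) (Sum.inr b')

end Join

theorem join_connected_reconf_general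
    {V₁ V₂ : Type*} [DecidableEq V₁] [DecidableEq V₂]
    (G₁ : SimpleGraph V₁) (G₂ : SimpleGraph V₂)
    (hc₁ : G₁.Connected) (hc₂ : G₂.Connected)
    (v₁ w₁ : V₁) (v₂ w₂ : V₂) :
    Relation.ReflTransGen (TSStep (joinGraph G₁ G₂))
      {Sum.inl v₁, Sum.inr v₂} {Sum.inl w₁, Sum.inr w₂} := by
  have slide₁ := (hc₁ v₁ w₁).reflTransGen_of_adj (fun a => {Sum.inl a, Sum.inr v₂})
    fun _ _ h => tsStep_joinGraph_inl G₁ G₂ v₂ h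
  have slide₂ := (hc₂ v₂ w₂).reflTransGen_of_adj (fun b => {Sum.inl w₁, Sum.inr b})
    fun _ _ h => tsStep_joinGraph_inr G₁ G₂ w₁ h
  exact slide₁.trans slide₂

theorem join_connected_reconf
    {V₁ V₂ : Type*} [DecidableEq V₁] [DecidableEq V₂] [Fintype V₁] [Fintype V₂]
    (G₁ : SimpleGraph V₁) (G₂ : SimpleGraph V₂)
    (h₁ : 3 ≤ dominationNumber V₁ G₁) (h₂ : 3 ≤ dominationNumber V₂ G₂)
    (hc₁ : G₁.Connected) (hc₂ : G₂.Connected)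
    (v₁ w₁ : V₁) (v₂ w₂ : V₂)
    (hs : MDominates (joinGraph G₁ G₂) {Sum.inl v₁, Sum.inr v₂})
    (ht : MDominates (joinGraph G₁ G₂) {Sum.inl w₁, Sum.inr w₂}) :
    Relation.ReflTransGen (TSStep (joinGraph G₁ G₂))
      {Sum.inl v₁, Sum.inr v₂} {Sum.inl w₁, Sum.inr w₂} :=
  join_connected_reconf_general G₁ G₂ hc₁ hc₂ v₁ w₁ v₂ w₂
end

section
/- Let G₁ and G₂ be simple graphs with γ(G₁) ≥ 3, γ(G₂) ≥ 3, such that G₁ is disconnected, with vertices u, w in distinct connected components of G₁ and v ∈ V(G₂). Then the dominating sets D_s = {u, v} and D_t = {w, v} of the join G = G₁ + G₂ cannot be reconfigured into each other by token sliding: every token-sliding sequence of dominating sets of size 2 starting from D_s never places both tokens in V(G₂), and the token in V(G₁) can never leave the component of u. -/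
/-!
Call a size-2 dominating multiset of `G₁ + G₂` *split* if it has one token `a ∈ V(G₁)` and one
token in `V(G₂)`. Since `γ(G₁), γ(G₂) ≥ 3`, no pair inside one side dominates the join, so every
slide keeps the configuration split. A slide of the `V(G₁)` token that stays in `V(G₁)` follows an
edge of `G₁`, so `a` never leaves its component; in particular `{w, v}` is unreachable.
-/

theorem dominationNumber_le_card_of_mDominates {V : Type*} [Fintype V] [DecidableEq V]
    {G : SimpleGraph V} {D : Multiset V} (hD : MDominates G D) :
    dominationNumber V G ≤ Multiset.card D :=
  calc dominationNumber V G ≤ D.toFinset.card :=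
        Nat.sInf_le ⟨D.toFinset, fun v ↦ by simpa using hD v, rfl⟩
    _ ≤ Multiset.card D := Multiset.toFinset_card_le D

theorem not_mDominates_pair {V : Type*} [Fintype V] [DecidableEq V] {G : SimpleGraph V}
    (hG : 3 ≤ dominationNumber V G) (b c : V) : ¬ MDominates G {b, c} := fun h ↦ by
  have := dominationNumber_le_card_of_mDominates h
  simp only [Multiset.insert_eq_cons, Multiset.card_cons, Multiset.card_singleton] at this
  omega

section Join

variable {V₁ V₂ : Type*} {G₁ : SimpleGraph V₁} {G₂ : SimpleGraph V₂}

theorem MDominates.of_joinGraph_map_inl {D : Multiset V₁}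
    (h : MDominates (joinGraph G₁ G₂) (D.map Sum.inl)) : MDominates G₁ D := fun v ↦ by
  obtain ⟨_, hd, hdv⟩ := h (Sum.inl v)
  obtain ⟨a, ha, rfl⟩ := Multiset.mem_map.mp hd
  exact ⟨a, ha, by simpa [joinGraph] using hdv⟩

theorem MDominates.of_joinGraph_map_inr {D : Multiset V₂}
    (h : MDominates (joinGraph G₁ G₂) (D.map Sum.inr)) : MDominates G₂ D := fun v ↦ by
  obtain ⟨_, hd, hdv⟩ := h (Sum.inr v)
  obtain ⟨a, ha, rfl⟩ := Multiset.mem_map.mp hd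
  exact ⟨a, ha, by simpa [joinGraph] using hdv⟩

theorem not_mDominates_joinGraph_inl_pair [Fintype V₁] [DecidableEq V₁]
    (h₁ : 3 ≤ dominationNumber V₁ G₁) (a c : V₁) :
    ¬ MDominates (joinGraph G₁ G₂) {Sum.inl a, Sum.inl c} := fun h ↦
  not_mDominates_pair h₁ a c (MDominates.of_joinGraph_map_inl (by simpa using h))

theorem not_mDominates_joinGraph_inr_pair [Fintype V₂] [DecidableEq V₂]
    (h₂ : 3 ≤ dominationNumber V₂ G₂) (b c : V₂) :
    ¬ MDominates (joinGraph G₁ G₂) {Sum.inr b, Sum.inr c} := fun h ↦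
  not_mDominates_pair h₂ b c (MDominates.of_joinGraph_map_inr (G₁ := G₁) (by simpa using h))

variable (G₁) in
def IsSplitFrom (u : V₁) (D : Multiset (V₁ ⊕ V₂)) : Prop :=
  ∃ a b, D = {Sum.inl a, Sum.inr b} ∧ G₁.Reachable u a

theorem IsSplitFrom.exists_inl_mem {u : V₁} {D : Multiset (V₁ ⊕ V₂)}
    (hD : IsSplitFrom G₁ u D) : ∃ a, Sum.inl a ∈ D := by
  obtain ⟨a, b, rfl, -⟩ := hD
  exact ⟨a, by simp⟩

theorem IsSplitFrom.reachable_of_inl_mem {u a : V₁} {D : Multiset (V₁ ⊕ V₂)}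
    (hD : IsSplitFrom G₁ u D) (ha : Sum.inl a ∈ D) : G₁.Reachable u a := by
  obtain ⟨a', b, rfl, hua'⟩ := hD
  simp only [Multiset.insert_eq_cons, Multiset.mem_cons, Multiset.mem_singleton, Sum.inl.injEq,
    reduceCtorEq, or_false] at ha
  exact ha ▸ hua'

variable [Fintype V₁] [Fintype V₂] [DecidableEq V₁] [DecidableEq V₂]

theorem IsSplitFrom.tsStep (h₁ : 3 ≤ dominationNumber V₁ G₁) (h₂ : 3 ≤ dominationNumber V₂ G₂)
    {u : V₁} {D D' : Multiset (V₁ ⊕ V₂)} (hD : IsSplitFrom G₁ u D)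
    (hstep : TSStep (joinGraph G₁ G₂) D D') : IsSplitFrom G₁ u D' := by
  obtain ⟨a, b, rfl, hua⟩ := hD
  obtain ⟨-, hdom', x, y, hxy, hx, rfl⟩ := hstep
  simp only [Multiset.insert_eq_cons, Multiset.mem_cons, Multiset.mem_singleton] at hx
  rcases hx with rfl | rfl
  · have herase : ({Sum.inl a, Sum.inr b} : Multiset (V₁ ⊕ V₂)).erase (Sum.inl a) =
        {Sum.inr b} := by simp [Multiset.insert_eq_cons]
    rw [herase] at hdom' ⊢
    rcases y with c | c
    · exact ⟨c, b, rfl, hua.trans (show G₁.Adj a c from hxy).reachable⟩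
    · exact (not_mDominates_joinGraph_inr_pair h₂ c b hdom').elim
  · have herase : ({Sum.inl a, Sum.inr b} : Multiset (V₁ ⊕ V₂)).erase (Sum.inr b) =
        {Sum.inl a} := by simp [Multiset.insert_eq_cons]
    rw [herase] at hdom' ⊢
    rcases y with c | c
    · exact (not_mDominates_joinGraph_inl_pair h₁ c a hdom').elim
    · exact ⟨a, c, Multiset.cons_swap _ _ _, hua⟩

theorem IsSplitFrom.reflTransGen (h₁ : 3 ≤ dominationNumber V₁ G₁)
    (h₂ : 3 ≤ dominationNumber V₂ G₂) {u : V₁} {D D' : Multiset (V₁ ⊕ V₂)}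
    (hD : IsSplitFrom G₁ u D) (hDD' : Relation.ReflTransGen (TSStep (joinGraph G₁ G₂)) D D') :
    IsSplitFrom G₁ u D' := by
  induction hDD' with
  | refl => exact hD
  | tail _ hstep ih => exact ih.tsStep h₁ h₂ hstep

end Join

theorem join_disconnected_not_reconf
    {V₁ V₂ : Type*} [DecidableEq V₁] [DecidableEq V₂] [Fintype V₁] [Fintype V₂]
    (G₁ : SimpleGraph V₁) (G₂ : SimpleGraph V₂)
    (h₁ : 3 ≤ dominationNumber V₁ G₁) (h₂ : 3 ≤ dominationNumber V₂ G₂)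
    (u w : V₁) (huw : ¬ G₁.Reachable u w) (v : V₂) :
    ¬ Relation.ReflTransGen (TSStep (joinGraph G₁ G₂))
        {Sum.inl u, Sum.inr v} {Sum.inl w, Sum.inr v} ∧
      ∀ D : Multiset (V₁ ⊕ V₂),
        Relation.ReflTransGen (TSStep (joinGraph G₁ G₂)) {Sum.inl u, Sum.inr v} D →
          (∃ a : V₁, Sum.inl a ∈ D) ∧
          (∀ a : V₁, Sum.inl a ∈ D → G₁.Reachable u a) := by
  have hsplit : ∀ D, Relation.ReflTransGen (TSStep (joinGraph G₁ G₂)) {Sum.inl u, Sum.inr v} D →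
      IsSplitFrom G₁ u D := fun D ↦ IsSplitFrom.reflTransGen h₁ h₂ ⟨u, v, rfl, SimpleGraph.Reachable.refl u⟩
  exact ⟨fun h ↦ huw ((hsplit _ h).reachable_of_inl_mem (by simp)),
    fun D hD ↦ ⟨(hsplit D hD).exists_inl_mem, fun _ ↦ (hsplit D hD).reachable_of_inl_mem⟩⟩
end

section
/- Let G be a graph and D_s, D_t two dominating sets of G of the same size k. Then D_s can be reconfigured into D_t under token jumping (all intermediate sets are dominating sets of size exactly k, each step replaces one vertex by an arbitrary vertex) if and only if D_s can be reconfigured into D_t under token addition/removal with threshold k+1 (each step adds or removes one vertex, all intermediate sets are dominating sets of size at most k+1). -/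
def FDominates {V : Type*} (G : SimpleGraph V) (D : Finset V) : Prop :=
  ∀ v : V, ∃ d ∈ D, d = v ∨ G.Adj d v

/-- A token-jumping step: replace one vertex of the dominating set by an arbitrary
new vertex; both sets are dominating of size exactly `k`. -/
def TJStep {V : Type*} [DecidableEq V] (G : SimpleGraph V) (k : ℕ)
    (D D' : Finset V) : Prop :=
  FDominates G D ∧ FDominates G D' ∧ D.card = k ∧ D'.card = k ∧
    ∃ u v : V, u ∈ D ∧ v ∉ D ∧ D' = insert v (D.erase u)

/-- A token addition/removal step with threshold `k+1`: add or remove one vertex,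
all sets dominating of size at most `k+1`. -/
def TARStep {V : Type*} [DecidableEq V] (G : SimpleGraph V) (k : ℕ)
    (D D' : Finset V) : Prop :=
  FDominates G D ∧ FDominates G D' ∧ D.card ≤ k + 1 ∧ D'.card ≤ k + 1 ∧
    ((∃ v : V, v ∉ D ∧ D' = insert v D) ∨ (∃ v : V, v ∈ D ∧ D' = D.erase v))

/-!
A token jump `u ↦ v` is simulated by adding `v` and then removing `u`, passing through a
dominating set of size `k + 1`. Conversely, along a TAR sequence starting at `D_s` we carry a
dominating `k`-set `S` that is TJ-reachable from `D_s` and either contains the current set `D`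
or is `D` minus one vertex: adding a vertex to `D ⊊ S` is matched by a jump of a token of `S \ D`
onto it, and removing a vertex of `S` from `insert w S` by a jump of that token onto `w`.
At `D_t`, which has size `k`, the first alternative forces `S = D_t`.
-/

open Relation

theorem FDominates.mono {V : Type*} {G : SimpleGraph V} {D E : Finset V} (hDE : D ⊆ E)
    (hD : FDominates G D) : FDominates G E := fun v => by
  obtain ⟨d, hd, hdv⟩ := hD v
  exact ⟨d, hDE hd, hdv⟩

section

variable {V : Type*} [DecidableEq V] {G : SimpleGraph V} {k : ℕ}

theorem TJStep.reflTransGen_tarStep {D D' : Finset V} (h : TJStep G k D D') :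
    ReflTransGen (TARStep G k) D D' := by
  obtain ⟨hD, hD', hcard, hcard', u, v, hu, hv, rfl⟩ := h
  have hmid : FDominates G (insert v D) := hD.mono (Finset.subset_insert v D)
  have hmid_card : (insert v D).card = k + 1 := by
    rw [Finset.card_insert_of_notMem hv, hcard]
  have huv : v ≠ u := fun h => hv (h ▸ hu)
  refine (ReflTransGen.single ⟨hD, hmid, by omega, hmid_card.le, .inl ⟨v, hv, rfl⟩⟩).tail
    ⟨hmid, hD', hmid_card.le, by omega, .inr ⟨u, Finset.mem_insert_of_mem hu, ?_⟩⟩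
  exact (Finset.erase_insert_of_ne huv).symm

theorem TJStep.of_dominates_insert_erase {S : Finset V} {u v : V} (hS : FDominates G S)
    (hcard : S.card = k) (hu : u ∈ S) (hv : v ∉ S)
    (hdom : FDominates G (insert v (S.erase u))) : TJStep G k S (insert v (S.erase u)) := by
  have hv' : v ∉ S.erase u := fun h => hv (Finset.mem_of_mem_erase h)
  refine ⟨hS, hdom, hcard, ?_, u, v, hu, hv, rfl⟩
  rw [Finset.card_insert_of_notMem hv', Finset.card_erase_of_mem hu, hcard]
  have := Finset.card_pos.mpr ⟨u, hu⟩
  omega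

def TJShadow (G : SimpleGraph V) (k : ℕ) (Ds D : Finset V) : Prop :=
  ∃ S, FDominates G S ∧ S.card = k ∧ ReflTransGen (TJStep G k) Ds S ∧
    (D ⊆ S ∨ ∃ w ∉ S, insert w S = D)

namespace TJShadow

variable {Ds D : Finset V}

theorem of_tjStep {S S' : Finset V} (hreach : ReflTransGen (TJStep G k) Ds S)
    (hstep : TJStep G k S S') (hDS' : D ⊆ S') : TJShadow G k Ds D :=
  have ⟨_, hS', _, hcard', _⟩ := hstep
  ⟨S', hS', hcard', hreach.tail hstep, .inl hDS'⟩

theorem add {v : V} (h : TJShadow G k Ds D) (hv : v ∉ D)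
    (hdom : FDominates G (insert v D)) (hcard : (insert v D).card ≤ k + 1) :
    TJShadow G k Ds (insert v D) := by
  obtain ⟨S, hS, hScard, hreach, hDS | ⟨w, hw, rfl⟩⟩ := h
  · by_cases hvS : v ∈ S
    · exact ⟨S, hS, hScard, hreach, .inl (Finset.insert_subset hvS hDS)⟩
    obtain rfl | hDS' := hDS.eq_or_ssubset
    · exact ⟨D, hS, hScard, hreach, .inr ⟨v, hv, rfl⟩⟩
    obtain ⟨u, huS, huD⟩ := Finset.exists_of_ssubset hDS'
    have hsub : insert v D ⊆ insert v (S.erase u) :=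
      Finset.insert_subset_insert v fun x hx =>
        Finset.mem_erase.mpr ⟨fun h => huD (h ▸ hx), hDS hx⟩
    exact of_tjStep hreach (.of_dominates_insert_erase hS hScard huS hvS (hdom.mono hsub)) hsub
  · rw [Finset.card_insert_of_notMem hv, Finset.card_insert_of_notMem hw] at hcard
    omega

theorem remove {v : V} (h : TJShadow G k Ds D) (hv : v ∈ D) (hdom : FDominates G (D.erase v)) :
    TJShadow G k Ds (D.erase v) := by
  obtain ⟨S, hS, hScard, hreach, hDS | ⟨w, hw, rfl⟩⟩ := h
  · exact ⟨S, hS, hScard, hreach, .inl ((Finset.erase_subset v D).trans hDS)⟩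
  obtain rfl | hwv := eq_or_ne w v
  · rw [Finset.erase_insert hw]
    exact ⟨S, hS, hScard, hreach, .inl subset_rfl⟩
  have hvS : v ∈ S := (Finset.mem_insert.mp hv).resolve_left hwv.symm
  rw [Finset.erase_insert_of_ne hwv] at hdom ⊢
  exact of_tjStep hreach (.of_dominates_insert_erase hS hScard hvS hw hdom) subset_rfl

theorem of_reflTransGen_tarStep (hDs : FDominates G Ds) (hcard : Ds.card = k)
    (h : ReflTransGen (TARStep G k) Ds D) : TJShadow G k Ds D := by
  induction h with
  | refl => exact ⟨Ds, hDs, hcard, .refl, .inl subset_rfl⟩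
  | tail _ step ih =>
    obtain ⟨-, hdom, -, hcard', ⟨v, hv, rfl⟩ | ⟨v, hv, rfl⟩⟩ := step
    · exact ih.add hv hdom hcard'
    · exact ih.remove hv hdom

theorem reflTransGen_tjStep (h : TJShadow G k Ds D) (hcard : D.card = k) :
    ReflTransGen (TJStep G k) Ds D := by
  obtain ⟨S, -, hScard, hreach, hDS | ⟨w, hw, rfl⟩⟩ := h
  · rwa [Finset.eq_of_subset_of_card_le hDS (by omega)]
  · rw [Finset.card_insert_of_notMem hw] at hcard
    omega

end TJShadow

end

theorem tj_iff_tar_general {V : Type*} [DecidableEq V] (G : SimpleGraph V) (k : ℕ)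
    (Ds Dt : Finset V) (hDs : FDominates G Ds)
    (hcs : Ds.card = k) (hct : Dt.card = k) :
    Relation.ReflTransGen (TJStep G k) Ds Dt ↔
      Relation.ReflTransGen (TARStep G k) Ds Dt :=
  ⟨reflTransGen_closed (fun _ _ => TJStep.reflTransGen_tarStep) Ds Dt,
    fun h => (TJShadow.of_reflTransGen_tarStep hDs hcs h).reflTransGen_tjStep hct⟩

theorem tj_iff_tar {V : Type*} [DecidableEq V] (G : SimpleGraph V) (k : ℕ)
    (Ds Dt : Finset V) (hDs : FDominates G Ds) (hDt : FDominates G Dt)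
    (hcs : Ds.card = k) (hct : Dt.card = k) :
    Relation.ReflTransGen (TJStep G k) Ds Dt ↔
      Relation.ReflTransGen (TARStep G k) Ds Dt :=
  tj_iff_tar_general G k Ds Dt hDs hcs hct
end

section
/- Let G be a graph and G' the bipartite graph obtained by subdividing domination: V(G') = V(G) ∪ {z_{uv} : uv ∈ E(G)} ∪ {x, y}, with edges u z_{uv} and v z_{uv} for every edge uv of G, the edge xy, and edges xv for every v ∈ V(G) (no original edges of G are kept). If C is a vertex cover of G, then C ∪ {x} is a dominating set of G'. -/
/-- Vertex type of the bipartite gadget: original vertices (`.inl (.inl v)`), the pendant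
vertex `y` (`.inl (.inr ())`), a subdivision vertex `z_e` for each edge `e` of `G`
(`.inr (.inl e)`), and the apex `x` (`.inr (.inr ())`). -/
abbrev BipVtx (V : Type*) (G : SimpleGraph V) : Type _ :=
  (V ⊕ Unit) ⊕ (G.edgeSet ⊕ Unit)

/-- The bipartite graph `G'`: each `z_{uv}` is adjacent exactly to `u` and `v`, `x` is
adjacent to all original vertices and to `y`; no original edges are kept. -/
def bipGraph {V : Type*} (G : SimpleGraph V) : SimpleGraph (BipVtx V G) where
  Adj a b :=
    match a, b with
    | Sum.inl (Sum.inl v), Sum.inr (Sum.inl e) => v ∈ (e : Sym2 V)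
    | Sum.inr (Sum.inl e), Sum.inl (Sum.inl v) => v ∈ (e : Sym2 V)
    | Sum.inl (Sum.inl _), Sum.inr (Sum.inr _) => True
    | Sum.inr (Sum.inr _), Sum.inl (Sum.inl _) => True
    | Sum.inl (Sum.inr _), Sum.inr (Sum.inr _) => True
    | Sum.inr (Sum.inr _), Sum.inl (Sum.inr _) => True
    | _, _ => False
  symm := ⟨by rintro ((v | y) | (e | x)) ((v' | y') | (e' | x')) h <;> simp_all⟩
  loopless := ⟨by rintro ((v | y) | (e | x)) h <;> simp_all⟩

def IsDominatingSet {V : Type*} (G : SimpleGraph V) (D : Set V) : Prop :=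
  ∀ v : V, ∃ d ∈ D, d = v ∨ G.Adj d v

/-- A vertex cover: every edge has an endpoint in the set. -/
def IsVertexCover {V : Type*} (G : SimpleGraph V) (C : Set V) : Prop :=
  ∀ u v : V, G.Adj u v → u ∈ C ∨ v ∈ C

theorem vertexCover_gives_dominatingSet {V : Type*} (G : SimpleGraph V) (C : Set V)
    (hC : IsVertexCover G C) :
    IsDominatingSet (bipGraph G)
      ((fun v => (Sum.inl (Sum.inl v) : BipVtx V G)) '' C ∪
        {Sum.inr (Sum.inr ())}) := by
  rintro (((v | ⟨⟩)) | (⟨e, he⟩ | ⟨⟩))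
  · exact ⟨Sum.inr (Sum.inr ()), Or.inr rfl, Or.inr trivial⟩
  · exact ⟨Sum.inr (Sum.inr ()), Or.inr rfl, Or.inr trivial⟩
  · induction e using Sym2.ind with
    | _ u w =>
      rcases hC u w (G.mem_edgeSet.mp he) with h | h
      · exact ⟨Sum.inl (Sum.inl u), Or.inl ⟨u, h, rfl⟩,
          Or.inr (by simp [bipGraph])⟩
      · exact ⟨Sum.inl (Sum.inl w), Or.inl ⟨w, h, rfl⟩,
          Or.inr (by simp [bipGraph])⟩
  · exact ⟨Sum.inr (Sum.inr ()), Or.inr rfl, Or.inl rfl⟩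
end

section
/- With G' as above, let D be a dominating set of G' containing x but containing no subdivision vertex z_{uv}. Then D \ {x, y} is a vertex cover of G. -/
theorem dominatingSet_gives_vertexCover {V : Type*} (G : SimpleGraph V)
    (D : Set (BipVtx V G)) (hD : IsDominatingSet (bipGraph G) D)
    (hx : (Sum.inr (Sum.inr ()) : BipVtx V G) ∈ D)
    (hz : ∀ e : G.edgeSet, (Sum.inr (Sum.inl e) : BipVtx V G) ∉ D) :
    IsVertexCover G {v : V | (Sum.inl (Sum.inl v) : BipVtx V G) ∈ D} := by
  intro u v huv
  obtain ⟨d, hd, hcase⟩ := hD (Sum.inr (Sum.inl ⟨s(u, v), huv⟩))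
  rcases hcase with h | h
  · exact absurd (h ▸ hd) (hz _)
  · match d, h with
    | Sum.inl (Sum.inl w), h =>
      simp only [bipGraph, Sym2.mem_iff] at h
      rcases h with rfl | rfl
      · exact Or.inl hd
      · exact Or.inr hd
end

section
/- Let G be a graph with bandwidth at most k, and let G' be obtained from G by adding, for each edge uv of G, a new vertex z_{uv} adjacent exactly to u and v (keeping all edges of G). Then G' has bandwidth at most k(k+1). -/
/-- The graph obtained from `G` by adding, for each edge `e` of `G`, a new vertex `z_e`
adjacent exactly to the two endpoints of `e`; all edges of `G` are kept. -/
def addEdgeVerts {V : Type*} (G : SimpleGraph V) : SimpleGraph (V ⊕ G.edgeSet) where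
  Adj a b :=
    match a, b with
    | Sum.inl u, Sum.inl v => G.Adj u v
    | Sum.inl v, Sum.inr e => v ∈ (e : Sym2 V)
    | Sum.inr e, Sum.inl v => v ∈ (e : Sym2 V)
    | Sum.inr _, Sum.inr _ => False
  symm := ⟨by rintro (u | e) (v | f) h <;> simp_all <;> exact h.symm⟩
  loopless := ⟨by rintro (u | e) h <;> simp_all⟩

/-- `G` has bandwidth at most `k`: there is an injective integer labeling of the vertices
in which the labels of adjacent vertices differ by at most `k`. -/
def BandwidthLE {V : Type*} (G : SimpleGraph V) (k : ℕ) : Prop :=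
  ∃ ℓ : V → ℤ, Function.Injective ℓ ∧ ∀ u v : V, G.Adj u v → |ℓ u - ℓ v| ≤ k

theorem addEdgeVerts_bandwidth {V : Type*} (G : SimpleGraph V) (k : ℕ)
    (h : BandwidthLE G k) : BandwidthLE (addEdgeVerts G) (k * (k + 1)) := by
  obtain ⟨ℓ, hinj, hband⟩ := h
  set K : ℤ := (k : ℤ) with hK
  have hK0 : 0 ≤ K := Int.ofNat_nonneg k
  let m : Sym2 V → ℤ := Sym2.lift ⟨fun u v => min (ℓ u) (ℓ v), fun u v => min_comm _ _⟩
  let M : Sym2 V → ℤ := Sym2.lift ⟨fun u v => max (ℓ u) (ℓ v), fun u v => max_comm _ _⟩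
  have key : ∀ e : G.edgeSet, m e.1 < M e.1 ∧ M e.1 - m e.1 ≤ K := by
    rintro ⟨e, he⟩
    induction e using Sym2.ind with
    | _ u v =>
      rw [SimpleGraph.mem_edgeSet] at he
      have h1 : ℓ u ≠ ℓ v := fun h' => G.ne_of_adj he (hinj h')
      have h2 := hband u v he
      rw [abs_le] at h2
      simp only [m, M, Sym2.lift_mk]
      omega
  have mem : ∀ (v : V) (e : Sym2 V), v ∈ e → ℓ v = m e ∨ ℓ v = M e := by
    intro v e hv
    induction e using Sym2.ind with
    | _ x y =>
      rw [Sym2.mem_iff] at hv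
      simp only [m, M, Sym2.lift_mk]
      rcases hv with rfl | rfl <;> omega
  have eqlem : ∀ e f : Sym2 V, m e = m f → M e = M f → e = f := by
    intro e f
    induction e using Sym2.ind with
    | _ u v =>
      induction f using Sym2.ind with
      | _ x y =>
        simp only [m, M, Sym2.lift_mk]
        intro h1 h2
        have : (ℓ u = ℓ x ∧ ℓ v = ℓ y) ∨ (ℓ u = ℓ y ∧ ℓ v = ℓ x) := by omega
        rw [Sym2.eq_iff]
        rcases this with ⟨ha, hb⟩ | ⟨ha, hb⟩
        · exact Or.inl ⟨hinj ha, hinj hb⟩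
        · exact Or.inr ⟨hinj ha, hinj hb⟩
  refine ⟨Sum.elim (fun v => (K + 1) * ℓ v) (fun e => K * m e.1 + M e.1), ?_, ?_⟩
  · rintro (u | e) (v | f) hab <;>
      simp only [Sum.elim_inl, Sum.elim_inr] at hab
    · have := hinj (mul_left_cancel₀ (by positivity : (K + 1) ≠ 0) hab)
      exact congrArg Sum.inl this
    · exfalso
      obtain ⟨h1, h2⟩ := key f
      have hd : (K + 1) * (ℓ u - m f.1) = M f.1 - m f.1 := by linarith [hab]
      rcases le_or_gt (ℓ u - m f.1) 0 with hle | hlt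
      · nlinarith
      · have : 1 ≤ ℓ u - m f.1 := hlt
        nlinarith
    · exfalso
      obtain ⟨h1, h2⟩ := key e
      have hd : (K + 1) * (ℓ v - m e.1) = M e.1 - m e.1 := by linarith [hab]
      rcases le_or_gt (ℓ v - m e.1) 0 with hle | hlt
      · nlinarith
      · have : 1 ≤ ℓ v - m e.1 := hlt
        nlinarith
    · obtain ⟨h1, h2⟩ := key e
      obtain ⟨h3, h4⟩ := key f
      have hd : (K + 1) * (m e.1 - m f.1) = (M f.1 - m f.1) - (M e.1 - m e.1) := by
        linarith [hab]
      have hm : m e.1 = m f.1 := by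
        rcases lt_trichotomy (m e.1 - m f.1) 0 with hlt | heq | hgt
        · have : m e.1 - m f.1 ≤ -1 := by omega
          nlinarith
        · omega
        · have : 1 ≤ m e.1 - m f.1 := hgt
          nlinarith
      have hM : M e.1 = M f.1 := by
        have := hab
        rw [hm] at this
        linarith
      exact congrArg Sum.inr (Subtype.ext (eqlem e.1 f.1 hm hM))
  · have hcast : ((k * (k + 1) : ℕ) : ℤ) = K * (K + 1) := by push_cast; ring
    rintro (u | e) (v | f) hadj <;>
      simp only [Sum.elim_inl, Sum.elim_inr, hcast]
    · have hb := hband u v hadj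
      rw [abs_le] at hb ⊢
      constructor <;> nlinarith
    · have hv : u ∈ (f : Sym2 V) := hadj
      obtain ⟨h1, h2⟩ := key f
      rw [abs_le]
      rcases mem u f.1 hv with he | he <;> rw [he] <;> constructor <;> nlinarith
    · have hv : v ∈ (e : Sym2 V) := hadj
      obtain ⟨h1, h2⟩ := key e
      rw [abs_le]
      rcases mem v e.1 hv with he | he <;> rw [he] <;> constructor <;> nlinarith
    · exact absurd hadj not_false
end

section
/- Every interval graph admits a maximum neighborhood ordering: there is an ordering v₁ < v₂ < ... < vₙ of the vertices (by nondecreasing right endpoints of a representing family of intervals) such that for every i, the neighbor vⱼ of vᵢ with the largest index at least i satisfies: for every neighbor v_k of v_i with k ≥ i and every neighbor v_ℓ of v_k with ℓ ≥ i, v_ℓ is adjacent or equal to v_j. In other words, in the induced subgraph Gᵢ on {vᵢ,...,vₙ}, every vertex vⱼ maximizing the index among N_{Gᵢ}[vᵢ] is a maximum neighbor of vᵢ, i.e., N_{Gᵢ}[w] ⊆ N_{Gᵢ}[vⱼ] for all w ∈ N_{Gᵢ}[vᵢ]. -/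
/-- The interval graph of the family of closed intervals `[l i, r i]`. -/
def intervalGraph {n : ℕ} (l r : Fin n → ℝ) : SimpleGraph (Fin n) where
  Adj i j := i ≠ j ∧ l j ≤ r i ∧ l i ≤ r j
  symm := by constructor; intro i j h; exact ⟨h.1.symm, h.2.2, h.2.1⟩
  loopless := by constructor; intro i h; exact h.1 rfl

/-!
If `i` has a later neighbour, let `j` be the latest one. Every `m ≥ i` at distance at most two
from `i` through some `w ≤ j` has `l m ≤ r w ≤ r j` (or `l m ≤ r i ≤ r j` when the path goes
through `i` itself) and `l j ≤ r i ≤ r m`, so the intervals of `m` and `j` meet.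
If `i` has no later neighbour, its closed neighbourhood in `Gᵢ` is `{i}`.
-/

namespace intervalGraph

variable {n : ℕ} {l r : Fin n → ℝ} {i j w m : Fin n}

theorem left_le_right_of_mem_closedNbhd (hr : Monotone r) (hij : i ≤ j)
    (hadj : (intervalGraph l r).Adj i j) (hw : w = i ∨ (intervalGraph l r).Adj i w) :
    l w ≤ r j := by
  rcases hw with rfl | hiw
  · exact hadj.2.2
  · exact hiw.2.1.trans (hr hij)

theorem mem_closedNbhd_of_adj_of_le (hr : Monotone r) (hij : i ≤ j)
    (hadj : (intervalGraph l r).Adj i j) (hwj : w ≤ j) (hw : w = i ∨ (intervalGraph l r).Adj i w)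
    (him : i ≤ m) (hm : m = w ∨ (intervalGraph l r).Adj w m) :
    m = j ∨ (intervalGraph l r).Adj j m := by
  refine or_iff_not_imp_left.2 fun hmj ↦ ⟨Ne.symm hmj, ?_, hadj.2.1.trans (hr him)⟩
  rcases hm with rfl | hwm
  · exact left_le_right_of_mem_closedNbhd hr hij hadj hw
  · exact hwm.2.1.trans (hr hwj)

end intervalGraph

theorem intervalGraph_max_nbhd_ordering_general {n : ℕ} (l r : Fin n → ℝ)
    (hmono : ∀ i j : Fin n, i ≤ j → r i ≤ r j) :
    ∀ i j : Fin n, i ≤ j → (j = i ∨ (intervalGraph l r).Adj i j) →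
      (∀ j' : Fin n, i ≤ j' → (j' = i ∨ (intervalGraph l r).Adj i j') → j' ≤ j) →
      ∀ w : Fin n, i ≤ w → (w = i ∨ (intervalGraph l r).Adj i w) →
        ∀ m : Fin n, i ≤ m → (m = w ∨ (intervalGraph l r).Adj w m) →
          (m = j ∨ (intervalGraph l r).Adj j m) := by
  intro i j hij hj hmax w hiw hw m him hm
  rcases hj with rfl | hadj
  · obtain rfl : w = j := le_antisymm (hmax w hiw hw) hiw
    exact Or.inl (le_antisymm (hmax m him hm) him)
  · exact intervalGraph.mem_closedNbhd_of_adj_of_le hmono hij hadj (hmax w hiw hw) hw him hm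

/-- Interval graphs are dually chordal: ordering the intervals by nondecreasing right
endpoints, for every `i` the largest-index member `j` of the closed neighborhood of `i`
within `{i, ..., n}` is a maximum neighbor of `i` in the induced subgraph `Gᵢ`:
`N_{Gᵢ}[w] ⊆ N_{Gᵢ}[vⱼ]` for every `w ∈ N_{Gᵢ}[vᵢ]`. -/
theorem intervalGraph_max_nbhd_ordering {n : ℕ} (l r : Fin n → ℝ)
    (hlr : ∀ i, l i ≤ r i) (hmono : ∀ i j : Fin n, i ≤ j → r i ≤ r j) :
    ∀ i j : Fin n, i ≤ j → (j = i ∨ (intervalGraph l r).Adj i j) →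
      (∀ j' : Fin n, i ≤ j' → (j' = i ∨ (intervalGraph l r).Adj i j') → j' ≤ j) →
      ∀ w : Fin n, i ≤ w → (w = i ∨ (intervalGraph l r).Adj i w) →
        ∀ m : Fin n, i ≤ m → (m = w ∨ (intervalGraph l r).Adj w m) →
          (m = j ∨ (intervalGraph l r).Adj j m) :=
  intervalGraph_max_nbhd_ordering_general l r hmono
end

section
/- Let G₁ and G₂ be nonempty graphs and let D_s and D_t be dominating multisets of the join G₁ + G₂ with |D_s| = |D_t| = k ≥ 3. Then D_s can be reconfigured into D_t by token sliding through dominating multisets of size k. -/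
/-!
In the join every vertex of one side is adjacent to every vertex of the other, so a multiset
with tokens on both sides dominates, and a token may jump to any vertex of the opposite side.
With at least three tokens, a token can also be moved to any vertex of its own side through the
other side while some token keeps each side occupied. Tokens can thus be collected one by one
into a canonical configuration, from either end since token sliding is symmetric.
-/

open Relation

section TokenSliding

variable {V : Type*} [DecidableEq V] {G : SimpleGraph V}

lemma TSStep.symm {D D' : Multiset V} (h : TSStep G D D') : TSStep G D' D := by
  obtain ⟨hD, hD', u, v, huv, hu, rfl⟩ := h
  refine ⟨hD', hD, v, u, huv.symm, Multiset.mem_cons_self _ _, ?_⟩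
  rw [Multiset.erase_cons_head, Multiset.cons_erase hu]

instance : Std.Symm (TSStep G) := ⟨fun _ _ => TSStep.symm⟩

lemma tsStep_cons {u v : V} {R : Multiset V} (huv : G.Adj u v)
    (hu : MDominates G (u ::ₘ R)) (hv : MDominates G (v ::ₘ R)) :
    TSStep G (u ::ₘ R) (v ::ₘ R) :=
  ⟨hu, hv, u, v, huv, Multiset.mem_cons_self _ _, by rw [Multiset.erase_cons_head]⟩

end TokenSliding

def IsMixed {V₁ V₂ : Type*} (D : Multiset (V₁ ⊕ V₂)) : Prop :=
  ∃ x ∈ D, ∃ y ∈ D, x.isLeft ≠ y.isLeft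

section Join

variable {V₁ V₂ : Type*} {G₁ : SimpleGraph V₁} {G₂ : SimpleGraph V₂}

lemma joinGraph_adj_of_isLeft_ne {x y : V₁ ⊕ V₂} (h : x.isLeft ≠ y.isLeft) :
    (joinGraph G₁ G₂).Adj x y := by
  rcases x with a | b <;> rcases y with a' | b' <;> first | exact trivial | exact absurd rfl h

lemma IsMixed.exists_isLeft_ne {D : Multiset (V₁ ⊕ V₂)} (hD : IsMixed D) (b : Bool) :
    ∃ x ∈ D, x.isLeft ≠ b := by
  obtain ⟨x, hx, y, hy, hxy⟩ := hD
  by_cases hb : x.isLeft = b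
  · exact ⟨y, hy, by rw [← hb]; exact hxy.symm⟩
  · exact ⟨x, hx, hb⟩

lemma IsMixed.mdominates {D : Multiset (V₁ ⊕ V₂)} (hD : IsMixed D) :
    MDominates (joinGraph G₁ G₂) D := fun v => by
  obtain ⟨x, hx, hxv⟩ := hD.exists_isLeft_ne v.isLeft
  exact ⟨x, hx, Or.inr (joinGraph_adj_of_isLeft_ne hxv)⟩

lemma exists_isLeft_ne [Nonempty V₁] [Nonempty V₂] (x : V₁ ⊕ V₂) :
    ∃ p : V₁ ⊕ V₂, p.isLeft ≠ x.isLeft := by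
  rcases x with a | b
  · exact ⟨Sum.inr (Classical.arbitrary V₂), by simp⟩
  · exact ⟨Sum.inl (Classical.arbitrary V₁), by simp⟩

variable [DecidableEq V₁] [DecidableEq V₂]

lemma tsStep_cons_of_isLeft_ne {u v : V₁ ⊕ V₂} {R : Multiset (V₁ ⊕ V₂)}
    (huv : u.isLeft ≠ v.isLeft) (hu : MDominates (joinGraph G₁ G₂) (u ::ₘ R))
    (hv : IsMixed (v ::ₘ R)) : TSStep (joinGraph G₁ G₂) (u ::ₘ R) (v ::ₘ R) :=
  tsStep_cons (joinGraph_adj_of_isLeft_ne huv) hu hv.mdominates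

lemma exists_isMixed_of_mdominates [Nonempty V₁] [Nonempty V₂] {D : Multiset (V₁ ⊕ V₂)}
    (hD : MDominates (joinGraph G₁ G₂) D) (hcard : 2 ≤ Multiset.card D) :
    ∃ E, IsMixed E ∧ Multiset.card E = Multiset.card D ∧
      ReflTransGen (TSStep (joinGraph G₁ G₂)) D E := by
  by_cases hmix : IsMixed D
  · exact ⟨D, hmix, rfl, .refl⟩
  obtain ⟨u, w, R, rfl⟩ : ∃ u w R, D = u ::ₘ w ::ₘ R := by
    obtain ⟨l⟩ := D
    match l, hcard with
    | u :: w :: R, _ => exact ⟨u, w, R, rfl⟩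
  obtain ⟨p, hp⟩ := exists_isLeft_ne u
  have hwu : w.isLeft = u.isLeft := by
    by_contra h
    exact hmix ⟨w, Multiset.mem_cons_of_mem (Multiset.mem_cons_self _ _), u,
      Multiset.mem_cons_self _ _, h⟩
  have hE : IsMixed (p ::ₘ w ::ₘ R) :=
    ⟨p, Multiset.mem_cons_self _ _, w, Multiset.mem_cons_of_mem (Multiset.mem_cons_self _ _),
      by rw [hwu]; exact hp⟩
  exact ⟨_, hE, by simp, .single (tsStep_cons_of_isLeft_ne (Ne.symm hp) hD hE)⟩

lemma reflTransGen_cons_of_isMixed {u v : V₁ ⊕ V₂} {R : Multiset (V₁ ⊕ V₂)}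
    (hu : IsMixed (u ::ₘ R)) (hv : IsMixed (v ::ₘ R)) (hR : 2 ≤ Multiset.card R) :
    ReflTransGen (TSStep (joinGraph G₁ G₂)) (u ::ₘ R) (v ::ₘ R) := by
  by_cases huv : u.isLeft ≠ v.isLeft
  · exact .single (tsStep_cons_of_isLeft_ne huv hu.mdominates hv)
  rw [not_not] at huv
  obtain ⟨p, hpR, hpv⟩ : ∃ p ∈ R, p.isLeft ≠ v.isLeft := by
    obtain ⟨p, hp, hpv⟩ := hv.exists_isLeft_ne v.isLeft
    rcases Multiset.mem_cons.1 hp with rfl | hpR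
    · exact absurd rfl hpv
    · exact ⟨p, hpR, hpv⟩
  rw [← huv] at hpv
  by_cases hside : ∃ q ∈ R, q.isLeft = u.isLeft
  · -- `R` keeps `u`'s side occupied: jump to `p`'s side, then back to `v`.
    obtain ⟨q, hqR, hqu⟩ := hside
    have hp : IsMixed (p ::ₘ R) :=
      ⟨p, Multiset.mem_cons_self _ _, q, Multiset.mem_cons_of_mem hqR, by rw [hqu]; exact hpv⟩
    exact .head (tsStep_cons_of_isLeft_ne (Ne.symm hpv) hu.mdominates hp)
      (.single (tsStep_cons_of_isLeft_ne (by rw [← huv]; exact hpv) hp.mdominates hv))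
  · -- `R` lies on the other side and has a second token, so `p` can jump to `v` first.
    push Not at hside
    obtain ⟨R', rfl⟩ := Multiset.exists_cons_of_mem hpR
    obtain ⟨r, hr⟩ : ∃ r, r ∈ R' := Multiset.card_pos_iff_exists_mem.1 (by simp at hR; omega)
    have hmid : IsMixed (v ::ₘ u ::ₘ R') :=
      ⟨v, Multiset.mem_cons_self _ _, r, by simp [hr],
        by rw [← huv]; exact (hside r (Multiset.mem_cons_of_mem hr)).symm⟩
    have h₁ : TSStep (joinGraph G₁ G₂) (u ::ₘ p ::ₘ R') (u ::ₘ v ::ₘ R') := by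
      rw [Multiset.cons_swap u p, Multiset.cons_swap u v]
      exact tsStep_cons_of_isLeft_ne (by rw [← huv]; exact hpv)
        (by rw [Multiset.cons_swap]; exact hu.mdominates) hmid
    have h₂ : TSStep (joinGraph G₁ G₂) (u ::ₘ v ::ₘ R') (v ::ₘ p ::ₘ R') := by
      rw [Multiset.cons_swap v p]
      exact tsStep_cons_of_isLeft_ne (Ne.symm hpv)
        (by rw [Multiset.cons_swap]; exact hmid.mdominates) (by rwa [Multiset.cons_swap])
    exact .head h₁ (.single h₂)

lemma reflTransGen_add_replicate {o c : V₁ ⊕ V₂} (hoc : o.isLeft ≠ c.isLeft)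
    (R : Multiset (V₁ ⊕ V₂)) {P : Multiset (V₁ ⊕ V₂)} (hoP : o ∈ P) (hPR : IsMixed (P + R))
    (hcard : 3 ≤ Multiset.card (P + R)) :
    ReflTransGen (TSStep (joinGraph G₁ G₂)) (P + R)
      (P + Multiset.replicate (Multiset.card R) c) := by
  induction R using Multiset.induction_on generalizing P with
  | empty => simpa using .refl
  | cons x R ih =>
    have hc : IsMixed (c ::ₘ P + R) := ⟨o, by simp [hoP], c, by simp, hoc⟩
    rw [Multiset.card_cons, Multiset.replicate_succ, Multiset.add_cons c P,
      ← Multiset.cons_add c P]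
    refine .trans ?_ (ih (Multiset.mem_cons_of_mem hoP) hc (by simp at hcard ⊢; omega))
    rw [Multiset.add_cons, Multiset.cons_add]
    exact reflTransGen_cons_of_isMixed (by rwa [← Multiset.add_cons])
      (by rwa [← Multiset.cons_add]) (by simp at hcard ⊢; omega)

lemma reflTransGen_cons_replicate {o c : V₁ ⊕ V₂} (hoc : o.isLeft ≠ c.isLeft)
    {D : Multiset (V₁ ⊕ V₂)} (hD : IsMixed D) (hcard : 3 ≤ Multiset.card D) :
    ReflTransGen (TSStep (joinGraph G₁ G₂)) D
      (o ::ₘ Multiset.replicate (Multiset.card D - 1) c) := by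
  obtain ⟨x, hxD, hxc⟩ := hD.exists_isLeft_ne c.isLeft
  obtain ⟨R, rfl⟩ := Multiset.exists_cons_of_mem hxD
  have hR : 2 ≤ Multiset.card R := by simp at hcard; omega
  have hc : c ∈ Multiset.replicate (Multiset.card R) c := Multiset.mem_replicate.2 ⟨by omega, rfl⟩
  have hgather := reflTransGen_add_replicate (G₁ := G₁) (G₂ := G₂) hxc R (P := {x})
    (Multiset.mem_singleton_self x) (by rwa [Multiset.singleton_add]) (by simpa using hcard)
  rw [Multiset.singleton_add, Multiset.singleton_add] at hgather
  rw [Multiset.card_cons, Nat.add_sub_cancel]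
  exact hgather.trans (reflTransGen_cons_of_isMixed ⟨x, by simp, c, by simp [hc], hxc⟩
    ⟨o, by simp, c, by simp [hc], hoc⟩ (by simpa using hR))

end Join

theorem join_reconf_of_three_tokens
    {V₁ V₂ : Type*} [DecidableEq V₁] [DecidableEq V₂] [Nonempty V₁] [Nonempty V₂]
    (G₁ : SimpleGraph V₁) (G₂ : SimpleGraph V₂) (k : ℕ) (hk : 3 ≤ k)
    (Ds Dt : Multiset (V₁ ⊕ V₂))
    (hDs : MDominates (joinGraph G₁ G₂) Ds) (hDt : MDominates (joinGraph G₁ G₂) Dt)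
    (hcs : Multiset.card Ds = k) (hct : Multiset.card Dt = k) :
    Relation.ReflTransGen (TSStep (joinGraph G₁ G₂)) Ds Dt := by
  obtain ⟨a₀⟩ := ‹Nonempty V₁›
  obtain ⟨b₀⟩ := ‹Nonempty V₂›
  have reach (D : Multiset (V₁ ⊕ V₂)) (hD : MDominates (joinGraph G₁ G₂) D)
      (hcard : Multiset.card D = k) : ReflTransGen (TSStep (joinGraph G₁ G₂)) D
        (Sum.inr b₀ ::ₘ Multiset.replicate (k - 1) (Sum.inl a₀)) := by
    obtain ⟨E, hE, hcardE, hDE⟩ := exists_isMixed_of_mdominates hD (by omega)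
    have hEC := reflTransGen_cons_replicate (G₁ := G₁) (G₂ := G₂) (o := Sum.inr b₀)
      (c := Sum.inl a₀) (by simp) hE (by omega)
    rw [hcardE, hcard] at hEC
    exact hDE.trans hEC
  exact (reach Ds hDs hcs).trans (symm (reach Dt hDt hct))
end
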